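/- arXiv:2503.21110 — 2 statements merged into one kernel-verified Lean document; each statement's English description precedes it below -/
import Mathlib

section
/- Let (Ω, ℙ) be a probability space, N a positive integer, D > 0, and let φ₁, …, φ_N : Ω → ℝ be independent random variables, each uniformly distributed on [0, D]. Let Δω ≥ 2π/D and define the complex random variable Q₀ = (1/N)·Σ_{n=1}^N exp(i·Δω·φₙ). For t > 0 set t₁ = max{ |t + sin(Δω·D)/(Δω·D)| , |−t + sin(Δω·D)/(Δω·D)| } and t₂ = |t + (1 − cos(Δω·D))/(Δω·D)|. Then ℙ( |Q₀| ≥ √(t₁² + t₂²) ) ≤ 4·exp(−N·t²/2). -/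
/-!
The real and imaginary parts of `Q₀` are the empirical means of the independent, `[-1, 1]`-valued
variables `cos (Δω φₙ)` and `sin (Δω φₙ)`, whose expectations are `μ₁ = sin (Δω D) / (Δω D)` and
`μ₂ = (1 - cos (Δω D)) / (Δω D)`. By Hoeffding's inequality each mean deviates from its
expectation by at least `t` with probability at most `2 exp (-N t² / 2)`. Outside these two events
`|Re Q₀| < |μ₁| + t ≤ t₁` and `|Im Q₀| < |μ₂| + t ≤ t₂`, the latter because `μ₂ ≥ 0` when `Δω > 0`;
hence `‖Q₀‖ < √(t₁² + t₂²)`.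
-/

open MeasureTheory ProbabilityTheory
open Real Set

section Hoeffding

variable {Ω : Type*} [MeasurableSpace Ω] {P : Measure Ω} [IsProbabilityMeasure P]
  {N : ℕ} {X : Fin N → Ω → ℝ} {m t : ℝ}

theorem measureReal_mean_ge_le (hN : 0 < N) (hX : ∀ n, AEMeasurable (X n) P)
    (hb : ∀ n, ∀ᵐ ω ∂P, X n ω ∈ Icc (-1) 1) (hindep : iIndepFun X P)
    (hm : ∀ n, P[X n] = m) (ht : 0 ≤ t) :
    P.real {ω | m + t ≤ (∑ n, X n ω) / N} ≤ exp (-(N * t ^ 2) / 2) := by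
  have hN' : (0 : ℝ) < N := Nat.cast_pos.mpr hN
  have hsubG : ∀ n ∈ Finset.univ, HasSubgaussianMGF (fun ω ↦ X n ω - m) 1 P := fun n _ ↦ by
    have hc : (‖(1 : ℝ) - -1‖₊ / 2) ^ 2 = 1 := by norm_num
    simpa only [hm n, hc] using hasSubgaussianMGF_of_mem_Icc (hX n) (hb n)
  have hindep' : iIndepFun (fun n ω ↦ X n ω - m) P :=
    hindep.comp (fun _ x ↦ x - m) fun _ ↦ measurable_id.sub_const m
  have hevent : {ω | m + t ≤ (∑ n, X n ω) / N} = {ω | N * t ≤ ∑ n, (X n ω - m)} := by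
    ext ω
    simp only [mem_ofPred_eq, Finset.sum_sub_distrib, Finset.sum_const, Finset.card_univ,
      Fintype.card_fin, nsmul_eq_mul, le_div_iff₀ hN']
    constructor <;> intro h <;> linarith
  calc P.real {ω | m + t ≤ (∑ n, X n ω) / N}
      ≤ exp (-(N * t) ^ 2 / (2 * ((∑ _n : Fin N, 1 : NNReal) : ℝ))) := by
        rw [hevent]
        exact HasSubgaussianMGF.measure_sum_ge_le_of_iIndepFun hindep' hsubG (by positivity)
    _ = exp (-(N * t ^ 2) / 2) := by
        congr 1
        simp only [Finset.sum_const, Finset.card_univ, Fintype.card_fin, nsmul_eq_mul, mul_one,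
          NNReal.coe_natCast]
        field_simp

theorem measureReal_mean_le_le (hN : 0 < N) (hX : ∀ n, AEMeasurable (X n) P)
    (hb : ∀ n, ∀ᵐ ω ∂P, X n ω ∈ Icc (-1) 1) (hindep : iIndepFun X P)
    (hm : ∀ n, P[X n] = m) (ht : 0 ≤ t) :
    P.real {ω | (∑ n, X n ω) / N ≤ m - t} ≤ exp (-(N * t ^ 2) / 2) := by
  have hneg := measureReal_mean_ge_le (X := fun n ω ↦ -X n ω) (m := -m) hN (fun n ↦ (hX n).neg)
    (fun n ↦ (hb n).mono fun _ h ↦ ⟨neg_le_neg h.2, by linarith [h.1]⟩)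
    (hindep.comp (fun _ x ↦ -x) fun _ ↦ measurable_neg)
    (fun n ↦ by rw [integral_neg, hm n]) ht
  convert hneg using 3
  ext ω
  simp only [Finset.sum_neg_distrib, neg_div]
  constructor <;> intro h <;> linarith

theorem measureReal_le_abs_mean_sub_le (hN : 0 < N) (hX : ∀ n, AEMeasurable (X n) P)
    (hb : ∀ n, ∀ᵐ ω ∂P, X n ω ∈ Icc (-1) 1) (hindep : iIndepFun X P)
    (hm : ∀ n, P[X n] = m) (ht : 0 ≤ t) :
    P.real {ω | t ≤ |(∑ n, X n ω) / N - m|} ≤ 2 * exp (-(N * t ^ 2) / 2) := by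
  have hevent : {ω | t ≤ |(∑ n, X n ω) / N - m|} =
      {ω | m + t ≤ (∑ n, X n ω) / N} ∪ {ω | (∑ n, X n ω) / N ≤ m - t} := by
    ext ω
    simp only [mem_ofPred_eq, mem_union, le_abs']
    constructor <;> rintro (h | h) <;> [right; left; right; left] <;> linarith
  rw [hevent, two_mul]
  exact (measureReal_union_le _ _).trans
    (add_le_add (measureReal_mean_ge_le hN hX hb hindep hm ht)
      (measureReal_mean_le_le hN hX hb hindep hm ht))

end Hoeffding

theorem integral_comp_eq_intervalIntegral_div_of_map_eq {Ω : Type*} [MeasurableSpace Ω]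
    {P : Measure Ω} {D : ℝ} (hD : 0 ≤ D) {φ : Ω → ℝ} (hφ : AEMeasurable φ P)
    (hunif : P.map φ = ENNReal.ofReal (1 / D) • volume.restrict (Icc 0 D))
    {g : ℝ → ℝ} (hg : Continuous g) :
    ∫ ω, g (φ ω) ∂P = (∫ x in 0..D, g x) / D := by
  rw [← integral_map hφ hg.aestronglyMeasurable, hunif, integral_smul_measure,
    ENNReal.toReal_ofReal (by positivity), intervalIntegral.integral_of_le hD,
    ← integral_Icc_eq_integral_Ioc, smul_eq_mul, one_div_mul_eq_div]

theorem intervalIntegral_cos_mul_div {a : ℝ} (ha : a ≠ 0) (D : ℝ) :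
    (∫ x in 0..D, cos (a * x)) / D = sin (a * D) / (a * D) := by
  rw [intervalIntegral.integral_comp_mul_left (fun x ↦ cos x) ha, integral_cos]
  simp only [mul_zero, sin_zero, sub_zero, smul_eq_mul]
  field_simp

theorem intervalIntegral_sin_mul_div {a : ℝ} (ha : a ≠ 0) (D : ℝ) :
    (∫ x in 0..D, sin (a * x)) / D = (1 - cos (a * D)) / (a * D) := by
  rw [intervalIntegral.integral_comp_mul_left (fun x ↦ sin x) ha, integral_sin]
  simp only [mul_zero, cos_zero, smul_eq_mul]
  field_simp

theorem measureReal_le_abs_mean_comp_sub_le {Ω : Type*} [MeasurableSpace Ω] {P : Measure Ω}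
    [IsProbabilityMeasure P] {N : ℕ} (hN : 0 < N) {D : ℝ} (hD : 0 ≤ D) {φ : Fin N → Ω → ℝ}
    (hmeas : ∀ n, Measurable (φ n)) (hindep : iIndepFun φ P)
    (hunif : ∀ n, P.map (φ n) = ENNReal.ofReal (1 / D) • volume.restrict (Icc 0 D))
    {g : ℝ → ℝ} (hg : Continuous g) (hg_mem : ∀ x, g x ∈ Icc (-1) 1) {t : ℝ} (ht : 0 ≤ t) :
    P.real {ω | t ≤ |(∑ n, g (φ n ω)) / N - (∫ x in 0..D, g x) / D|} ≤
      2 * exp (-(N * t ^ 2) / 2) :=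
  measureReal_le_abs_mean_sub_le hN
    (fun n ↦ hg.measurable.comp_aemeasurable (hmeas n).aemeasurable)
    (fun _ ↦ ae_of_all _ fun _ ↦ hg_mem _) (hindep.comp _ fun _ ↦ hg.measurable)
    (fun n ↦ integral_comp_eq_intervalIntegral_div_of_map_eq hD (hmeas n).aemeasurable
      (hunif n) hg) ht

theorem abs_add_le_max_abs_add_abs_neg_add (a t : ℝ) : |a| + t ≤ max |t + a| |-t + a| := by
  rcases le_total 0 a with h | h
  · rw [abs_of_nonneg h]; linarith [le_max_left |t + a| |-t + a|, le_abs_self (t + a)]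
  · rw [abs_of_nonpos h]; linarith [le_max_right |t + a| |-t + a|, neg_abs_le (-t + a)]

theorem re_mean_exp_I_mul {N : ℕ} (a : ℝ) (x : Fin N → ℝ) :
    ((1 / (N : ℂ)) * ∑ n, Complex.exp (Complex.I * a * x n)).re = (∑ n, cos (a * x n)) / N := by
  simp_rw [one_div_mul_eq_div, Complex.div_natCast_re, Complex.re_sum, mul_assoc,
    mul_comm Complex.I, ← Complex.ofReal_mul, Complex.exp_ofReal_mul_I_re]

theorem im_mean_exp_I_mul {N : ℕ} (a : ℝ) (x : Fin N → ℝ) :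
    ((1 / (N : ℂ)) * ∑ n, Complex.exp (Complex.I * a * x n)).im = (∑ n, sin (a * x n)) / N := by
  simp_rw [one_div_mul_eq_div, Complex.div_natCast_im, Complex.im_sum, mul_assoc,
    mul_comm Complex.I, ← Complex.ofReal_mul, Complex.exp_ofReal_mul_I_im]

theorem le_abs_re_sub_or_le_abs_im_sub_of_sqrt_le_norm {z : ℂ} {a b t t₁ t₂ : ℝ}
    (h₁ : |a| + t ≤ t₁) (h₂ : |b| + t ≤ t₂) (hz : √(t₁ ^ 2 + t₂ ^ 2) ≤ ‖z‖) :
    t ≤ |z.re - a| ∨ t ≤ |z.im - b| := by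
  by_contra! h
  obtain ⟨hre, him⟩ := h
  rw [abs_lt] at hre him
  have hsq : z.re ^ 2 + z.im ^ 2 < t₁ ^ 2 + t₂ ^ 2 := add_lt_add
    (sq_lt_sq' (by linarith [neg_abs_le a]) (by linarith [le_abs_self a]))
    (sq_lt_sq' (by linarith [neg_abs_le b]) (by linarith [le_abs_self b]))
  rw [Complex.norm_eq_sqrt_sq_add_sq] at hz
  exact hz.not_gt (Real.sqrt_lt_sqrt (by positivity) hsq)

/-- Lemma 2.1 of the paper: if `φ₁, …, φ_N` are i.i.d. uniform on `[0, D]` and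
`Δω ≥ 2π/D`, then the empirical quantity `Q₀ = (1/N)·Σₙ exp(i·Δω·φₙ)` satisfies
`P(|Q₀| ≥ √(t₁² + t₂²)) ≤ 4·exp(−N·t²/2)` for every `t > 0`, where
`t₁ = max |±t + sin(Δω·D)/(Δω·D)|` and `t₂ = |t + (1 − cos(Δω·D))/(Δω·D)|`. -/
theorem Q0_concentration
    {Ω : Type*} [MeasurableSpace Ω] (P : Measure Ω) [IsProbabilityMeasure P]
    (N : ℕ) (hN : 0 < N) (D : ℝ) (hD : 0 < D)
    (φ : Fin N → Ω → ℝ) (hmeas : ∀ n, Measurable (φ n))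
    (hindep : iIndepFun φ P)
    (hunif : ∀ n, Measure.map (φ n) P =
      ENNReal.ofReal (1 / D) • volume.restrict (Set.Icc (0:ℝ) D))
    (Δω : ℝ) (hΔω : 2 * Real.pi / D ≤ Δω)
    (Q₀ : Ω → ℂ)
    (hQ₀ : ∀ ω, Q₀ ω = (1 / (N:ℂ)) * ∑ n, Complex.exp (Complex.I * Δω * φ n ω))
    (t : ℝ) (ht : 0 < t)
    (t₁ t₂ : ℝ)
    (ht₁ : t₁ = max |t + Real.sin (Δω * D) / (Δω * D)|
                    |-t + Real.sin (Δω * D) / (Δω * D)|)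
    (ht₂ : t₂ = |t + (1 - Real.cos (Δω * D)) / (Δω * D)|) :
    P {ω | Real.sqrt (t₁ ^ 2 + t₂ ^ 2) ≤ ‖Q₀ ω‖} ≤
      ENNReal.ofReal (4 * Real.exp (-((N:ℝ) * t ^ 2) / 2)) := by
  have hΔω₀ : 0 < Δω := lt_of_lt_of_le (by positivity) hΔω
  set μ₁ := sin (Δω * D) / (Δω * D)
  set μ₂ := (1 - cos (Δω * D)) / (Δω * D)
  have hμ₁ : |μ₁| + t ≤ t₁ := ht₁ ▸ abs_add_le_max_abs_add_abs_neg_add μ₁ t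
  have hμ₂ : |μ₂| + t ≤ t₂ := by
    have : 0 ≤ μ₂ := div_nonneg (sub_nonneg.2 (cos_le_one _)) (by positivity)
    rw [ht₂, abs_of_nonneg this, add_comm]
    exact le_abs_self _
  have hcos := measureReal_le_abs_mean_comp_sub_le (g := fun x ↦ cos (Δω * x)) hN hD.le hmeas
    hindep hunif (by fun_prop) (fun _ ↦ ⟨neg_one_le_cos _, cos_le_one _⟩) ht.le
  have hsin := measureReal_le_abs_mean_comp_sub_le (g := fun x ↦ sin (Δω * x)) hN hD.le hmeas
    hindep hunif (by fun_prop) (fun _ ↦ ⟨neg_one_le_sin _, sin_le_one _⟩) ht.le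
  rw [intervalIntegral_cos_mul_div hΔω₀.ne'] at hcos
  rw [intervalIntegral_sin_mul_div hΔω₀.ne'] at hsin
  have hsub : {ω | √(t₁ ^ 2 + t₂ ^ 2) ≤ ‖Q₀ ω‖} ⊆
      {ω | t ≤ |(∑ n, cos (Δω * φ n ω)) / N - μ₁|} ∪
        {ω | t ≤ |(∑ n, sin (Δω * φ n ω)) / N - μ₂|} := fun ω hω ↦ by
    have := le_abs_re_sub_or_le_abs_im_sub_of_sqrt_le_norm hμ₁ hμ₂ hω
    rwa [hQ₀, re_mean_exp_I_mul, im_mean_exp_I_mul] at this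
  rw [← ofReal_measureReal]
  refine ENNReal.ofReal_le_ofReal ?_
  calc P.real {ω | √(t₁ ^ 2 + t₂ ^ 2) ≤ ‖Q₀ ω‖}
      ≤ _ := measureReal_mono hsub
    _ ≤ _ := measureReal_union_le _ _
    _ ≤ 4 * exp (-(N * t ^ 2) / 2) := by linarith
end

section
/- Let N be a positive integer, φ₁, …, φ_N nonnegative real numbers, ω₁, ω₂ real with Δω = ω₂ − ω₁, and s₁, s₂ ∈ ℂ. Define a₁, a₂ ∈ ℂ^N by (a_l)_n = exp(i·ω_l·φₙ), A the N×2 matrix with columns a₁, a₂, and the N×2 matrix 𝐃 with columns (i·φₙ·exp(i·ω₁·φₙ)·s₁)ₙ and (i·φₙ·exp(i·ω₂·φₙ)·s₂)ₙ. For ι = 0, 1, 2 set Q_ι = (Σₙ φₙ^ι·exp(i·Δω·φₙ))/(Σₙ φₙ^ι), assume Σₙ φₙ ≠ 0, Σₙ φₙ² ≠ 0, and |Q₀| < 1, and set γ₀ = (Σₙ φₙ)²/(N·(1 − |Q₀|²)), Π = I_N − A·(AᴴA)⁻¹·Aᴴ, and F = Re( 𝐃ᴴ·Π·𝐃 ) (entrywise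 real part of a 2×2 matrix). Then F = Re( (F₁ + F₂ + F₃) ⊙ S ), where F₁ = (Σₙ φₙ²)·[[1, Q₂], [conj(Q₂), 1]], F₂ = −γ₀·[[1 + |Q₁|², 2·Q₁], [2·conj(Q₁), 1 + |Q₁|²]], F₃ = γ₀·[[Q₀·conj(Q₁) + conj(Q₀)·Q₁, conj(Q₀)·Q₁·Q₁ + Q₀], [Q₀·conj(Q₁)·conj(Q₁) + conj(Q₀), Q₀·conj(Q₁) + conj(Q₀)·Q₁]], S = [[|s₁|², conj(s₁)·s₂], [conj(s₂)·s₁, |s₂|²]], and ⊙ denotes the entrywise (Hadamard) product. -/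
/-!
With `Φ = diag φ` the derivative matrix factors as `𝐃 = i • Φ A diag s`, so
`𝐃ᴴ Π 𝐃 = diag s̄ (G₂ - G₁ G₀⁻¹ G₁) diag s` with the weighted Gram matrices `G_ι = Aᴴ Φ^ι A`.
Since `conj (a₁ n) * a₂ n = exp (i Δω φₙ)`, each `G_ι` equals `(∑ φₙ^ι) • !![1, Q_ι; Q̄_ι, 1]`;
the Schur complement of these 2 × 2 matrices is `F₁ + F₂ + F₃`, and conjugating by diagonal
matrices is the Hadamard product with `S`. The identity already holds before taking real parts.
-/

open Matrix Complex
open scoped Matrix ComplexConjugate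

theorem Complex.conj_exp_mul_exp (a b x : ℝ) :
    conj (exp (I * a * x)) * exp (I * b * x) = exp (I * (b - a) * x) := by
  rw [← exp_conj, ← exp_add]
  congr 1
  simp only [map_mul, conj_I, conj_ofReal]
  ring

theorem Complex.vecMulVec_star_fin_two (a b : ℂ) :
    vecMulVec (star ![a, b]) ![a, b] = !![(‖a‖ : ℂ) ^ 2, conj a * b; conj b * a, (‖b‖ : ℂ) ^ 2] := by
  ext i j
  fin_cases i <;> fin_cases j <;> simp [← mul_conj', mul_comm]

namespace Matrix

theorem diagonal_mul_mul_diagonal_eq_hadamard {n R : Type*} [Fintype n] [DecidableEq n]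
    [CommSemiring R] (u v : n → R) (X : Matrix n n R) :
    diagonal u * X * diagonal v = X ⊙ vecMulVec u v := by
  ext i j
  simp only [mul_diagonal, diagonal_mul, hadamard_apply, vecMulVec_apply]
  ring

theorem smul_conjTranspose_mul_one_sub_mul_smul {m n R : Type*} [Fintype m] [Fintype n]
    [DecidableEq m] [CommRing R] [StarRing R] {c : R} (hc : c ∈ unitary R) (A : Matrix m n R)
    (W : Matrix m m R) (hW : W.IsHermitian) (M T : Matrix n n R) :
    (c • (W * A * T))ᴴ * (1 - A * M * Aᴴ) * (c • (W * A * T)) =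
      Tᴴ * (Aᴴ * (W * W) * A - Aᴴ * W * A * M * (Aᴴ * W * A)) * T := by
  simp only [conjTranspose_smul, conjTranspose_mul, hW.eq, Matrix.smul_mul, Matrix.mul_smul,
    smul_sub, smul_smul, Unitary.mul_star_self_of_mem hc, one_smul, Matrix.mul_sub,
    Matrix.sub_mul, Matrix.mul_one, Matrix.mul_assoc]

-- No invertibility is needed: in the singular case both sides are `0`.
theorem inv_smul_fin_two_of {K : Type*} [Field K] (c q r : K) :
    (c • !![1, q; r, 1])⁻¹ = (c * (1 - q * r))⁻¹ • !![1, -q; -r, 1] := by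
  rcases eq_or_ne c 0 with rfl | hc
  · simp
  rw [inv_def, Ring.inverse_eq_inv', det_smul, det_fin_two_of, adjugate_smul, adjugate_fin_two_of,
    smul_smul]
  congr 1
  norm_num [Fintype.card_fin]
  field_simp

theorem schur_complement_fin_two {K : Type*} [Field K] (N P P₂ q₀ r₀ q₁ r₁ q₂ r₂ : K) :
    P₂ • !![1, q₂; r₂, 1] - P • !![1, q₁; r₁, 1] * (N • !![1, q₀; r₀, 1])⁻¹ * (P • !![1, q₁; r₁, 1])
      = P₂ • !![1, q₂; r₂, 1] + -((P ^ 2 * (N * (1 - q₀ * r₀))⁻¹) •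
          !![1 + q₁ * r₁, 2 * q₁; 2 * r₁, 1 + q₁ * r₁]) +
        (P ^ 2 * (N * (1 - q₀ * r₀))⁻¹) •
          !![q₀ * r₁ + r₀ * q₁, r₀ * q₁ * q₁ + q₀; q₀ * r₁ * r₁ + r₀, q₀ * r₁ + r₀ * q₁] := by
  rw [inv_smul_fin_two_of]
  ext i j
  fin_cases i <;> fin_cases j <;> simp <;> ring

end Matrix

theorem steering_gram_apply {m n : Type*} [Fintype m] [DecidableEq m] (φ : m → ℝ) (ω : n → ℝ)
    (A : Matrix m n ℂ) (hA : ∀ k l, A k l = exp (I * ω l * φ k)) (w : m → ℂ) (i j : n) :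
    (Aᴴ * diagonal w * A) i j = ∑ k, w k * exp (I * (ω j - ω i) * φ k) := by
  rw [mul_apply]
  refine Finset.sum_congr rfl fun k _ => ?_
  rw [mul_diagonal, conjTranspose_apply, hA, hA, RCLike.star_def, mul_right_comm,
    conj_exp_mul_exp, mul_comm]

theorem steering_gram_fin_two {m : Type*} [Fintype m] [DecidableEq m] (φ : m → ℝ) (ω : Fin 2 → ℝ)
    (A : Matrix m (Fin 2) ℂ) (hA : ∀ k l, A k l = exp (I * ω l * φ k)) (w : m → ℝ) (Q : ℂ)
    (hQ : ((∑ k, w k : ℝ) : ℂ) * Q = ∑ k, (w k : ℂ) * exp (I * (ω 1 - ω 0) * φ k)) :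
    Aᴴ * diagonal (fun k => (w k : ℂ)) * A = ((∑ k, w k : ℝ) : ℂ) • !![1, Q; conj Q, 1] := by
  have hQc : ((∑ k, w k : ℝ) : ℂ) * conj Q = ∑ k, (w k : ℂ) * exp (I * (ω 0 - ω 1) * φ k) := by
    have := congrArg conj hQ
    simp only [map_mul, conj_ofReal, map_sum, ← exp_conj, conj_I, map_sub] at this
    rw [this]
    congr! 3
    ring
  ext i j
  rw [steering_gram_apply φ ω A hA]
  fin_cases i <;> fin_cases j <;> simp [← hQ, ← hQc]

theorem fisher_matrix_via_Q_general (N : ℕ) (hN : 0 < N) (φ : Fin N → ℝ)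
    (ω₁ ω₂ Δω : ℝ) (hΔω : Δω = ω₂ - ω₁) (s₁ s₂ : ℂ)
    (A Dmat : Matrix (Fin N) (Fin 2) ℂ)
    (hA : ∀ n, A n 0 = Complex.exp (Complex.I * ω₁ * φ n) ∧
               A n 1 = Complex.exp (Complex.I * ω₂ * φ n))
    (hD : ∀ n, Dmat n 0 = Complex.I * φ n * Complex.exp (Complex.I * ω₁ * φ n) * s₁ ∧
               Dmat n 1 = Complex.I * φ n * Complex.exp (Complex.I * ω₂ * φ n) * s₂)
    (Q₀ Q₁ Q₂ : ℂ)
    (hQ₀ : Q₀ = (∑ n, Complex.exp (Complex.I * Δω * φ n)) / (N : ℂ))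
    (hQ₁ : Q₁ = (∑ n, (φ n : ℂ) * Complex.exp (Complex.I * Δω * φ n)) /
        ((∑ n, φ n : ℝ) : ℂ))
    (hQ₂ : Q₂ = (∑ n, (φ n : ℂ) ^ 2 * Complex.exp (Complex.I * Δω * φ n)) /
        ((∑ n, (φ n) ^ 2 : ℝ) : ℂ))
    (hsum1 : (∑ n, φ n) ≠ 0) (hsum2 : (∑ n, (φ n) ^ 2) ≠ 0)
    (γ₀ : ℝ) (hγ₀ : γ₀ = (∑ n, φ n) ^ 2 / ((N : ℝ) * (1 - ‖Q₀‖ ^ 2)))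
    (Proj : Matrix (Fin N) (Fin N) ℂ) (hProj : Proj = 1 - A * (Aᴴ * A)⁻¹ * Aᴴ)
    (F : Matrix (Fin 2) (Fin 2) ℝ) (hF : F = (Dmatᴴ * Proj * Dmat).map Complex.re)
    (F₁ F₂ F₃ S : Matrix (Fin 2) (Fin 2) ℂ)
    (hF₁ : F₁ = ((∑ n, (φ n) ^ 2 : ℝ) : ℂ) • !![1, Q₂; starRingEnd ℂ Q₂, 1])
    (hF₂ : F₂ = -((γ₀ : ℂ) •
        !![1 + (‖Q₁‖ : ℂ) ^ 2, 2 * Q₁;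
           2 * starRingEnd ℂ Q₁, 1 + (‖Q₁‖ : ℂ) ^ 2]))
    (hF₃ : F₃ = (γ₀ : ℂ) •
        !![Q₀ * starRingEnd ℂ Q₁ + starRingEnd ℂ Q₀ * Q₁,
           starRingEnd ℂ Q₀ * Q₁ * Q₁ + Q₀;
           Q₀ * starRingEnd ℂ Q₁ * starRingEnd ℂ Q₁ + starRingEnd ℂ Q₀,
           Q₀ * starRingEnd ℂ Q₁ + starRingEnd ℂ Q₀ * Q₁])
    (hS : S = !![(‖s₁‖ : ℂ) ^ 2, starRingEnd ℂ s₁ * s₂;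
                 starRingEnd ℂ s₂ * s₁, (‖s₂‖ : ℂ) ^ 2]) :
    F = (Matrix.hadamard (F₁ + F₂ + F₃) S).map Complex.re := by
  have hA' : ∀ n l, A n l = exp (I * ![ω₁, ω₂] l * φ n) := fun n => Fin.forall_fin_two.2 (hA n)
  have hDA : Dmat = I • (diagonal (fun n => (φ n : ℂ)) * A * diagonal ![s₁, s₂]) := by
    ext n l
    fin_cases l <;> simp [mul_diagonal, diagonal_mul, hA, hD] <;> ring
  have hG₀ : Aᴴ * A = (N : ℂ) • !![1, Q₀; conj Q₀, 1] := by
    simpa using steering_gram_fin_two φ _ A hA' 1 Q₀ (by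
      simp [hQ₀, hΔω, mul_div_cancel₀ _ (Nat.cast_ne_zero.2 hN.ne' : (N : ℂ) ≠ 0)])
  have hG₁ : Aᴴ * diagonal (fun n => (φ n : ℂ)) * A = ((∑ n, φ n : ℝ) : ℂ) • !![1, Q₁; conj Q₁, 1] :=
    steering_gram_fin_two φ _ A hA' φ Q₁ (by
      rw [hQ₁, mul_div_cancel₀ _ (ofReal_ne_zero.2 hsum1), hΔω]; simp)
  have hG₂ : Aᴴ * (diagonal (fun n => (φ n : ℂ)) * diagonal (fun n => (φ n : ℂ))) * A =
      ((∑ n, φ n ^ 2 : ℝ) : ℂ) • !![1, Q₂; conj Q₂, 1] := by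
    convert steering_gram_fin_two φ _ A hA' (fun n => φ n ^ 2) Q₂ (by
      rw [hQ₂, mul_div_cancel₀ _ (ofReal_ne_zero.2 hsum2), hΔω]; simp) using 2
    simp [diagonal_mul_diagonal, sq]
  have hγ : (γ₀ : ℂ) = ((∑ n, φ n : ℝ) : ℂ) ^ 2 * ((N : ℂ) * (1 - Q₀ * conj Q₀))⁻¹ := by
    rw [hγ₀, mul_conj']
    push_cast
    ring
  have hΦ : (diagonal (fun n => (φ n : ℂ))).IsHermitian :=
    isHermitian_diagonal_of_self_adjoint _ (funext fun n => conj_ofReal (φ n))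
  have hI : I ∈ unitary ℂ := by simp [Unitary.mem_iff]
  have key : Dmatᴴ * Proj * Dmat = (F₁ + F₂ + F₃) ⊙ S := by
    rw [hProj, hDA, smul_conjTranspose_mul_one_sub_mul_smul hI A _ hΦ, hG₀, hG₁, hG₂,
      diagonal_conjTranspose, diagonal_mul_mul_diagonal_eq_hadamard, hS, ← vecMulVec_star_fin_two,
      schur_complement_fin_two, mul_conj' Q₁, ← hγ, hF₁, hF₂, hF₃]
  rw [hF, key]

/-- Equations (79)–(82) of the paper (single snapshot): the Fisher-information-type
matrix `F = Re(𝐃ᴴ·Π_A^⊥·𝐃)` of the two-source direction-finding model can be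
written as `F = Re((F₁ + F₂ + F₃) ⊙ S)`, so it depends on the separation `Δω`
only through the intermediate quantities `Q₀, Q₁, Q₂`. -/
theorem fisher_matrix_via_Q (N : ℕ) (hN : 0 < N) (φ : Fin N → ℝ)
    (hφ : ∀ n, 0 ≤ φ n) (ω₁ ω₂ Δω : ℝ) (hΔω : Δω = ω₂ - ω₁) (s₁ s₂ : ℂ)
    (A Dmat : Matrix (Fin N) (Fin 2) ℂ)
    (hA : ∀ n, A n 0 = Complex.exp (Complex.I * ω₁ * φ n) ∧
               A n 1 = Complex.exp (Complex.I * ω₂ * φ n))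
    (hD : ∀ n, Dmat n 0 = Complex.I * φ n * Complex.exp (Complex.I * ω₁ * φ n) * s₁ ∧
               Dmat n 1 = Complex.I * φ n * Complex.exp (Complex.I * ω₂ * φ n) * s₂)
    (Q₀ Q₁ Q₂ : ℂ)
    (hQ₀ : Q₀ = (∑ n, Complex.exp (Complex.I * Δω * φ n)) / (N : ℂ))
    (hQ₁ : Q₁ = (∑ n, (φ n : ℂ) * Complex.exp (Complex.I * Δω * φ n)) /
        ((∑ n, φ n : ℝ) : ℂ))
    (hQ₂ : Q₂ = (∑ n, (φ n : ℂ) ^ 2 * Complex.exp (Complex.I * Δω * φ n)) /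
        ((∑ n, (φ n) ^ 2 : ℝ) : ℂ))
    (hsum1 : (∑ n, φ n) ≠ 0) (hsum2 : (∑ n, (φ n) ^ 2) ≠ 0)
    (hQ : ‖Q₀‖ < 1)
    (γ₀ : ℝ) (hγ₀ : γ₀ = (∑ n, φ n) ^ 2 / ((N : ℝ) * (1 - ‖Q₀‖ ^ 2)))
    (Proj : Matrix (Fin N) (Fin N) ℂ) (hProj : Proj = 1 - A * (Aᴴ * A)⁻¹ * Aᴴ)
    (F : Matrix (Fin 2) (Fin 2) ℝ) (hF : F = (Dmatᴴ * Proj * Dmat).map Complex.re)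
    (F₁ F₂ F₃ S : Matrix (Fin 2) (Fin 2) ℂ)
    (hF₁ : F₁ = ((∑ n, (φ n) ^ 2 : ℝ) : ℂ) • !![1, Q₂; starRingEnd ℂ Q₂, 1])
    (hF₂ : F₂ = -((γ₀ : ℂ) •
        !![1 + (‖Q₁‖ : ℂ) ^ 2, 2 * Q₁;
           2 * starRingEnd ℂ Q₁, 1 + (‖Q₁‖ : ℂ) ^ 2]))
    (hF₃ : F₃ = (γ₀ : ℂ) •
        !![Q₀ * starRingEnd ℂ Q₁ + starRingEnd ℂ Q₀ * Q₁,
           starRingEnd ℂ Q₀ * Q₁ * Q₁ + Q₀;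
           Q₀ * starRingEnd ℂ Q₁ * starRingEnd ℂ Q₁ + starRingEnd ℂ Q₀,
           Q₀ * starRingEnd ℂ Q₁ + starRingEnd ℂ Q₀ * Q₁])
    (hS : S = !![(‖s₁‖ : ℂ) ^ 2, starRingEnd ℂ s₁ * s₂;
                 starRingEnd ℂ s₂ * s₁, (‖s₂‖ : ℂ) ^ 2]) :
    F = (Matrix.hadamard (F₁ + F₂ + F₃) S).map Complex.re :=
  fisher_matrix_via_Q_general N hN φ ω₁ ω₂ Δω hΔω s₁ s₂ A Dmat hA hD Q₀ Q₁ Q₂ hQ₀ hQ₁ hQ₂ hsum1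
    hsum2 γ₀ hγ₀ Proj hProj F hF F₁ F₂ F₃ S hF₁ hF₂ hF₃ hS
end
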